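/- In the marginal mean estimation setting with the identity choice φ₁(y) = y, and assuming Var(X) > 0 and Var(Y) > 0, the optimal weight γ* := n₁·Cov(X,Y)/(n·Var(Y)) yields Var(θ̂_{γ*}) = (Var(X)/n₀)·(1 − (n₁/n)·Corr²(X,Y)), where Corr(X,Y) := Cov(X,Y)/√(Var(X)·Var(Y)). -/

import Mathlib

open MeasureTheory ProbabilityTheory Finset
open scoped NNReal ENNReal BigOperators

/-!
The estimator splits as `θ̂_γ = mean_{A₀}(X - γY) + γ · mean_{A₁}(Y)`. The two sample means are
built from disjoint blocks of an independent family, hence independent, and each is a mean of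
i.i.d. terms, so `Var θ̂_γ = Var(X - γY)/n₀ + γ² Var Y/n₁`, a quadratic in `γ`. Substituting its
minimiser `γ*` gives the claimed value.
-/

/-- Covariance of two real random variables. -/
noncomputable def cov {Ωs : Type*} [MeasurableSpace Ωs] (μ : Measure Ωs) (f g : Ωs → ℝ) : ℝ :=
  ∫ ω, (f ω - ∫ ω', f ω' ∂μ) * (g ω - ∫ ω', g ω' ∂μ) ∂μ

/-- Variance of a real random variable. -/
noncomputable def var {Ωs : Type*} [MeasurableSpace Ωs] (μ : Measure Ωs) (f : Ωs → ℝ) : ℝ :=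
  cov μ f f

/-- Pearson correlation of two real random variables. -/
noncomputable def corr {Ωs : Type*} [MeasurableSpace Ωs] (μ : Measure Ωs) (f g : Ωs → ℝ) : ℝ :=
  cov μ f g / Real.sqrt (var μ f * var μ g)

section

variable {Ω Ω' E ι : Type*} [MeasurableSpace Ω] [MeasurableSpace Ω'] [MeasurableSpace E]
  {μ : Measure Ω} {ν : Measure Ω'}

lemma cov_eq_covariance (f g : Ω → ℝ) : cov μ f g = cov[f, g; μ] := rfl

lemma var_eq_variance {f : Ω → ℝ} (hf : AEMeasurable f μ) : var μ f = Var[f; μ] :=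
  covariance_self hf

lemma var_nonneg (f : Ω → ℝ) : 0 ≤ var μ f :=
  integral_nonneg fun _ => mul_self_nonneg _

lemma corr_sq (f g : Ω → ℝ) : corr μ f g ^ 2 = cov μ f g ^ 2 / (var μ f * var μ g) := by
  rw [corr, div_pow, Real.sq_sqrt (mul_nonneg (var_nonneg f) (var_nonneg g))]

lemma variance_sum_div_card_of_identDistrib {Z : ι → Ω → ℝ} {ξ : Ω' → ℝ} {s : Finset ι}
    (hξ : MemLp ξ 2 ν) (hident : ∀ i ∈ s, IdentDistrib (Z i) ξ μ ν)
    (hindep : Set.Pairwise ↑s fun i j => Z i ⟂ᵢ[μ] Z j) :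
    Var[fun ω => (∑ i ∈ s, Z i ω) / #s; μ] = Var[ξ; ν] / #s := by
  have hZ : ∀ i ∈ s, MemLp (Z i) 2 μ := fun i hi => (hident i hi).symm.memLp_snd hξ
  have hmean : (fun ω => (∑ i ∈ s, Z i ω) / #s) = fun ω => (#s : ℝ)⁻¹ * (∑ i ∈ s, Z i) ω := by
    ext ω
    rw [Finset.sum_apply, div_eq_inv_mul]
  rw [hmean, variance_const_mul, IndepFun.variance_sum hZ hindep,
    Finset.sum_congr rfl fun i hi => (hident i hi).variance_eq, sum_const, nsmul_eq_mul]
  rcases (#s).eq_zero_or_pos with hs | hs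
  · simp [hs]
  · field_simp

lemma ProbabilityTheory.iIndepFun.indepFun_sum_comp_sum_comp {W : ι → Ω → E}
    (hW : iIndepFun W μ) (hmeas : ∀ i, Measurable (W i)) {S T : Finset ι} (hST : Disjoint S T)
    {f g : E → ℝ} (hf : Measurable f) (hg : Measurable g) :
    IndepFun (fun ω => ∑ i ∈ S, f (W i ω)) (fun ω => ∑ i ∈ T, g (W i ω)) μ := by
  have h := (hW.indepFun_finset S T hST hmeas).comp
    (φ := fun v : S → E => ∑ i, f (v i)) (ψ := fun v : T → E => ∑ i, g (v i))
    (by fun_prop) (by fun_prop)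
  convert h using 1 <;> ext ω
  · exact (Finset.sum_coe_sort S fun i => f (W i ω)).symm
  · exact (Finset.sum_coe_sort T fun i => g (W i ω)).symm

end

theorem variance_cam_estimator {Ω Ω' : Type*} [MeasurableSpace Ω] [MeasurableSpace Ω']
    {μ : Measure Ω} {ν : Measure Ω'} [IsProbabilityMeasure ν]
    {W : ℕ → Ω → ℝ × ℝ} {ξ : Ω' → ℝ × ℝ} (hmeas : ∀ i, Measurable (W i))
    (hindep : iIndepFun W μ) (hident : ∀ i, IdentDistrib (W i) ξ μ ν) (hξ : MemLp ξ 2 ν)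
    {A0 A1 : Finset ℕ} (hdisj : Disjoint A0 A1) (γ : ℝ) :
    Var[fun ω => (∑ i ∈ A0, (W i ω).1) / #A0
        - γ * ((∑ i ∈ A0, (W i ω).2) / #A0 - (∑ i ∈ A1, (W i ω).2) / #A1); μ]
      = (Var[fun ω => (ξ ω).1; ν] - 2 * γ * cov[fun ω => (ξ ω).1, fun ω => (ξ ω).2; ν]
          + γ ^ 2 * Var[fun ω => (ξ ω).2; ν]) / #A0
        + γ ^ 2 * Var[fun ω => (ξ ω).2; ν] / #A1 := by
  have hWL2 : ∀ i, MemLp (W i) 2 μ := fun i => (hident i).symm.memLp_snd hξ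
  have hφ : Measurable fun p : ℝ × ℝ => p.1 - γ * p.2 := by fun_prop
  set U := fun ω => (∑ i ∈ A0, ((W i ω).1 - γ * (W i ω).2)) / #A0
  set V := fun ω => (∑ i ∈ A1, (W i ω).2) / #A1
  have hsplit : (fun ω => (∑ i ∈ A0, (W i ω).1) / #A0
      - γ * ((∑ i ∈ A0, (W i ω).2) / #A0 - (∑ i ∈ A1, (W i ω).2) / #A1))
      = fun ω => U ω + γ * V ω := by
    ext ω
    simp only [U, V, sum_sub_distrib, ← mul_sum]
    ring
  have hUV : IndepFun U (fun ω => γ * V ω) μ :=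
    (hindep.indepFun_sum_comp_sum_comp hmeas hdisj hφ measurable_snd).comp
      (measurable_id.div_const _) (measurable_const.mul (measurable_id.div_const _))
  have hUL2 : MemLp U 2 μ := by
    simpa only [U, div_eq_mul_inv, Pi.sub_apply] using (memLp_finsetSum A0 fun i _ =>
      (hWL2 i).fst.sub ((hWL2 i).snd.const_mul γ)).mul_const (#A0 : ℝ)⁻¹
  have hVL2 : MemLp (fun ω => γ * V ω) 2 μ := by
    simpa only [V, div_eq_mul_inv] using
      ((memLp_finsetSum A1 fun i _ => (hWL2 i).snd).mul_const (#A1 : ℝ)⁻¹).const_mul γ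
  have hVarU : Var[U; μ] = Var[fun ω => (ξ ω).1 - γ * (ξ ω).2; ν] / #A0 :=
    variance_sum_div_card_of_identDistrib (Z := fun i ω => (W i ω).1 - γ * (W i ω).2)
      (hξ.fst.sub (hξ.snd.const_mul γ)) (fun i _ => (hident i).comp hφ)
      (fun i _ j _ hij => (hindep.comp _ fun _ => hφ).indepFun hij)
  have hVarV : Var[V; μ] = Var[fun ω => (ξ ω).2; ν] / #A1 :=
    variance_sum_div_card_of_identDistrib (Z := fun i ω => (W i ω).2)
      hξ.snd (fun i _ => (hident i).comp measurable_snd)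
      (fun i _ j _ hij => (hindep.comp _ fun _ => measurable_snd).indepFun hij)
  rw [hsplit, hUV.variance_fun_add hUL2 hVL2, variance_const_mul, hVarU, hVarV,
    variance_fun_sub hξ.fst (hξ.snd.const_mul γ), variance_const_mul, covariance_const_mul_right]
  ring

/-- Marginal mean estimation with the identity choice `φ₁(y) = y`:
with `Var X > 0` and `Var Y > 0`, the optimal weight `γ* := n₁·Cov(X,Y)/(n·Var Y)`
yields `Var(θ̂_{γ*}) = (Var X/n₀)·(1 − (n₁/n)·Corr²(X,Y))`. -/
theorem stmt9 {Ωs : Type*} [MeasurableSpace Ωs] (P : Measure Ωs) [IsProbabilityMeasure P]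
    (W : ℕ → Ωs → ℝ × ℝ) (hmeas : ∀ i, Measurable (W i))
    (hindep : iIndepFun W P)
    (hident : ∀ i, IdentDistrib (W i) (W 0) P P)
    (hL2 : MemLp (W 0) 2 P)
    (A0 A1 : Finset ℕ) (hdisj : Disjoint A0 A1)
    (n0 n1 : ℕ) (hcard0 : A0.card = n0) (hcard1 : A1.card = n1)
    (hn0 : 1 ≤ n0) (hn1 : 1 ≤ n1)
    (hvarX : 0 < var P (fun ω => (W 0 ω).1))
    (hvarY : 0 < var P (fun ω => (W 0 ω).2))
    (θhat0 θhat01 θhat1 : Ωs → ℝ)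
    (h0 : θhat0 = fun ω => (∑ i ∈ A0, (W i ω).1) / n0)
    (h01 : θhat01 = fun ω => (∑ i ∈ A0, (W i ω).2) / n0)
    (h1 : θhat1 = fun ω => (∑ i ∈ A1, (W i ω).2) / n1)
    (γstar : ℝ)
    (hγstar : γstar = n1 * cov P (fun ω => (W 0 ω).1) (fun ω => (W 0 ω).2)
        / ((n0 + n1 : ℕ) * var P (fun ω => (W 0 ω).2))) :
    var P (fun ω => θhat0 ω - γstar * (θhat01 ω - θhat1 ω))
      = (var P (fun ω => (W 0 ω).1) / n0)
          * (1 - ((n1 : ℝ) / (n0 + n1 : ℕ))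
              * (corr P (fun ω => (W 0 ω).1) (fun ω => (W 0 ω).2)) ^ 2) := by
  subst h0 h01 h1 hcard0 hcard1 hγstar
  have hX : AEMeasurable (fun ω => (W 0 ω).1) P := (hmeas 0).fst.aemeasurable
  have hY : AEMeasurable (fun ω => (W 0 ω).2) P := (hmeas 0).snd.aemeasurable
  rw [corr_sq]
  simp only [var_eq_variance hX, var_eq_variance hY] at hvarX hvarY ⊢
  rw [var_eq_variance (by fun_prop), variance_cam_estimator hmeas hindep hident hL2 hdisj,
    cov_eq_covariance]
  have : (#A0 : ℝ) ≠ 0 := by positivity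
  have : (#A1 : ℝ) ≠ 0 := by positivity
  push_cast
  field_simp
  ring
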